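/- arXiv:math/9909163 — 2 statements merged into one kernel-verified Lean document; each statement's English description precedes it below -/
import Mathlib

section
/- Let C ⊆ Mat_{n,s}(F_q) be a linear MDS [ns,k]_s-code in the metric ρ (a k-dimensional subspace with minimum nonzero ρ-weight equal to ns - k + 1). Then its dual code C^⊥ with respect to the inner product ⟨Ω_1,Ω_2⟩ = Σ_{j=1}^n Σ_{i=1}^s ξ'^{(j)}_i ξ''^{(j)}_{s+1-i} is a linear MDS [ns, ns-k]_s-code in the metric ρ, i.e., dim C^⊥ = ns - k and ρ(C^⊥) = k + 1. -/
/-- Rosenbloom–Tsfasman weight of a row vector. -/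
def rhoRow {F : Type*} [Zero F] [DecidableEq F] {s : ℕ} (ω : Fin s → F) : ℕ :=
  (Finset.univ.filter fun j => ω j ≠ 0).sup fun j => j.1 + 1

/-- Rosenbloom–Tsfasman weight of a matrix: the sum of the ρ-weights of its rows. -/
def rhoMat {F : Type*} [Zero F] [DecidableEq F] {n s : ℕ}
    (Ω : Matrix (Fin n) (Fin s) F) : ℕ :=
  ∑ i, rhoRow (Ω i)

/-- The minimum nonzero ρ-weight of a linear code. -/
noncomputable def rhoLin {F : Type*} [Field F] [DecidableEq F] {n s : ℕ}
    (C : Submodule F (Matrix (Fin n) (Fin s) F)) : ℕ :=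
  sInf {r | ∃ Ω ∈ C, Ω ≠ 0 ∧ rhoMat Ω = r}

/-- The inner product `⟨Ω₁,Ω₂⟩ = Σ_j Σ_i Ω₁(j,i)·Ω₂(j,s+1-i)`, pairing the entries of
each row in reversed column order. -/
def rtInner {F : Type*} [Field F] {n s : ℕ} (Ω₁ Ω₂ : Matrix (Fin n) (Fin s) F) : F :=
  ∑ j, ∑ i, Ω₁ j i * Ω₂ j i.rev

/-- The dual code of `C` with respect to the inner product `rtInner`. -/
def dualCode {F : Type*} [Field F] {n s : ℕ}
    (C : Submodule F (Matrix (Fin n) (Fin s) F)) :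
    Submodule F (Matrix (Fin n) (Fin s) F) where
  carrier := {Ω' | ∀ Ω ∈ C, rtInner Ω Ω' = 0}
  zero_mem' := by intro Ω hΩ; simp [rtInner]
  add_mem' := by
    intro a b ha hb Ω hΩ
    have : rtInner Ω (a + b) = rtInner Ω a + rtInner Ω b := by
      simp [rtInner, Matrix.add_apply, mul_add, Finset.sum_add_distrib]
    rw [this, ha Ω hΩ, hb Ω hΩ, add_zero]
  smul_mem' := by
    intro c a ha Ω hΩ
    have : rtInner Ω (c • a) = c * rtInner Ω a := by
      simp only [rtInner, Matrix.smul_apply, smul_eq_mul, Finset.mul_sum]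
      exact Finset.sum_congr rfl fun j _ => Finset.sum_congr rfl fun i _ => by ring
    rw [this, ha Ω hΩ, mul_zero]


/-!
The pairing is a nondegenerate symmetric bilinear form, so `dim C^⊥ = ns - k`. Everything else
comes from the subspaces `V_r` of matrices whose `j`-th row vanishes beyond column `r j`:
`dim V_r = ∑ r j`, elements of `V_r` have weight at most `∑ r j`, and `V_r ⟂ V_t` whenever
`r j + t j ≤ s` for all `j`. Intersecting `D` with a `V_r` of dimension `ns - dim D + 1` gives the
Singleton bound `ρ(D) ≤ ns - dim D + 1`, hence `ρ(C^⊥) ≤ k + 1`. Conversely, if `Ω' ∈ C^⊥` is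
nonzero of weight at most `k`, pick `r` with `r j ≤ s - ρ(Ω'_j)` and `∑ r j = ns - k`. As `C` is
MDS, `C ∩ V_r = 0`, so `C + V_r` is the whole space; but `Ω' ⟂ V_r`, `Ω' ⟂ C`, contradicting
nondegeneracy.
-/

open Module

lemma exists_le_sum_eq : ∀ {n : ℕ} (f : Fin n → ℕ) {K : ℕ}, K ≤ ∑ j, f j →
    ∃ g : Fin n → ℕ, (∀ j, g j ≤ f j) ∧ ∑ j, g j = K
  | 0, f, K, hK => ⟨f, fun _ => le_rfl, by simp_all⟩
  | m + 1, f, K, hK => by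
    rw [Fin.sum_univ_succ] at hK
    obtain ⟨g, hg, hsum⟩ := exists_le_sum_eq (fun j => f j.succ) (K := K - min (f 0) K) (by omega)
    refine ⟨Fin.cons (min (f 0) K) g, Fin.cases (min_le_left _ _) hg, ?_⟩
    rw [Fin.sum_univ_succ, Fin.cons_zero]
    simp only [Fin.cons_succ]
    omega

section Pairing

variable {F : Type*} [Field F] {n s : ℕ}

variable (F n s) in
def rtForm : LinearMap.BilinForm F (Matrix (Fin n) (Fin s) F) :=
  LinearMap.mk₂ F rtInner
    (fun a b c => by simp [rtInner, add_mul, Finset.sum_add_distrib])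
    (fun c a b => by simp [rtInner, Finset.mul_sum, mul_assoc])
    (fun a b c => by simp [rtInner, mul_add, Finset.sum_add_distrib])
    (fun c a b => by simp [rtInner, Finset.mul_sum, mul_left_comm])

lemma rtForm_apply (a b : Matrix (Fin n) (Fin s) F) : rtForm F n s a b = rtInner a b := rfl

lemma rtInner_comm (a b : Matrix (Fin n) (Fin s) F) : rtInner a b = rtInner b a :=
  Finset.sum_congr rfl fun _ _ =>
    Fintype.sum_equiv Fin.revPerm _ _ fun _ => by simp [mul_comm]

lemma rtForm_isSymm : (rtForm F n s).IsSymm := ⟨rtInner_comm⟩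

lemma rtForm_nondegenerate : (rtForm F n s).Nondegenerate := by
  classical
  have hrefl := (LinearMap.BilinForm.isSymm_iff.1 (rtForm_isSymm (F := F) (n := n) (s := s))).isRefl
  refine hrefl.nondegenerate_iff_separatingLeft.2 fun Ω h => ?_
  ext j i
  simpa [rtForm_apply, rtInner, Matrix.single_apply, ite_and] using h (Matrix.single j i.rev 1)

lemma finrank_matrix_fin : finrank F (Matrix (Fin n) (Fin s) F) = n * s := by
  simp [finrank_matrix]

lemma finrank_dualCode (C : Submodule F (Matrix (Fin n) (Fin s) F)) :
    finrank F (dualCode C) = n * s - finrank F C := by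
  rw [show dualCode C = (rtForm F n s).orthogonal C from rfl,
    LinearMap.BilinForm.finrank_orthogonal rtForm_nondegenerate, finrank_matrix_fin]

lemma eq_zero_of_mem_dualCode_of_sup_eq_top {C V : Submodule F (Matrix (Fin n) (Fin s) F)}
    {Ω : Matrix (Fin n) (Fin s) F} (hΩ : Ω ∈ dualCode C) (hV : ∀ v ∈ V, rtInner v Ω = 0)
    (hCV : C ⊔ V = ⊤) : Ω = 0 := by
  have hle : C ⊔ V ≤ LinearMap.ker ((rtForm F n s).flip Ω) := sup_le (fun c hc => hΩ c hc) hV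
  rw [hCV] at hle
  exact rtForm_nondegenerate.2 Ω fun x => hle Submodule.mem_top

end Pairing

section Shape

variable {F : Type*} [Field F] {n s : ℕ}

variable (F) in
def shapeSubmodule (r : Fin n → ℕ) : Submodule F (Matrix (Fin n) (Fin s) F) where
  carrier := {Ω | ∀ j i, r j ≤ i.1 → Ω j i = 0}
  zero_mem' _ _ _ := rfl
  add_mem' ha hb j i h := by simp [ha j i h, hb j i h]
  smul_mem' c _ ha j i h := by simp [ha j i h]

noncomputable def shapeSubmoduleEquiv (r : Fin n → ℕ) :
    shapeSubmodule F (s := s) r ≃ₗ[F] ({p : Fin n × Fin s // p.2.1 < r p.1} → F) where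
  toFun Ω p := Ω.1 p.1.1 p.1.2
  map_add' _ _ := rfl
  map_smul' _ _ := rfl
  invFun g := ⟨fun j i => if h : i.1 < r j then g ⟨(j, i), h⟩ else 0,
    fun j i hle => dif_neg (by omega)⟩
  left_inv Ω := by
    ext j i
    by_cases h : i.1 < r j
    · simp [h]
    · simpa [h] using (Ω.2 j i (by omega)).symm
  right_inv g := by funext p; simp [p.2]

lemma finrank_shapeSubmodule {r : Fin n → ℕ} (hr : ∀ j, r j ≤ s) :
    finrank F (shapeSubmodule F (s := s) r) = ∑ j, r j := by
  classical
  rw [(shapeSubmoduleEquiv r).finrank_eq, finrank_pi, Fintype.card_subtype, Finset.card_filter,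
    Fintype.sum_prod_type]
  refine Finset.sum_congr rfl fun j _ => ?_
  dsimp only
  rw [← Finset.card_filter, Fin.card_filter_val_lt, min_eq_right (hr j)]

lemma rtInner_eq_zero_of_mem_shapeSubmodule {r t : Fin n → ℕ} (hrt : ∀ j, r j + t j ≤ s)
    {a b : Matrix (Fin n) (Fin s) F} (ha : a ∈ shapeSubmodule F r)
    (hb : b ∈ shapeSubmodule F t) : rtInner a b = 0 :=
  Finset.sum_eq_zero fun j _ => Finset.sum_eq_zero fun i _ => by
    by_cases hi : i.1 < r j
    · rw [hb j i.rev (by have := hrt j; simp only [Fin.val_rev]; omega), mul_zero]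
    · rw [ha j i (by omega), zero_mul]

variable [DecidableEq F]

lemma rhoRow_le_of_forall_le_imp_eq_zero {r : ℕ} {ω : Fin s → F}
    (h : ∀ i : Fin s, r ≤ i.1 → ω i = 0) : rhoRow ω ≤ r :=
  Finset.sup_le fun i hi => by
    by_contra hlt
    exact (Finset.mem_filter.1 hi).2 (h i (by omega))

lemma rhoRow_le (ω : Fin s → F) : rhoRow ω ≤ s :=
  rhoRow_le_of_forall_le_imp_eq_zero fun i hi => absurd i.2 (by omega)

lemma rhoMat_le_of_mem_shapeSubmodule {r : Fin n → ℕ} {Ω : Matrix (Fin n) (Fin s) F}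
    (h : Ω ∈ shapeSubmodule F r) : rhoMat Ω ≤ ∑ j, r j :=
  Finset.sum_le_sum fun j _ => rhoRow_le_of_forall_le_imp_eq_zero (h j)

lemma mem_shapeSubmodule_rhoRow (Ω : Matrix (Fin n) (Fin s) F) :
    Ω ∈ shapeSubmodule F (fun j => rhoRow (Ω j)) := fun j i (hle : rhoRow (Ω j) ≤ i.1) => by
  by_contra hne
  have : i.1 + 1 ≤ rhoRow (Ω j) :=
    Finset.le_sup (f := fun i : Fin s => i.1 + 1) (Finset.mem_filter.2 ⟨Finset.mem_univ _, hne⟩)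
  omega

end Shape

section Weights

variable {F : Type*} [Field F] [DecidableEq F] {n s : ℕ}

lemma rhoLin_le_rhoMat {C : Submodule F (Matrix (Fin n) (Fin s) F)}
    {Ω : Matrix (Fin n) (Fin s) F} (hΩ : Ω ∈ C) (h0 : Ω ≠ 0) : rhoLin C ≤ rhoMat Ω :=
  Nat.sInf_le ⟨Ω, hΩ, h0, rfl⟩

lemma le_rhoLin {C : Submodule F (Matrix (Fin n) (Fin s) F)} {d : ℕ} (hC : C ≠ ⊥)
    (h : ∀ Ω ∈ C, Ω ≠ 0 → d ≤ rhoMat Ω) : d ≤ rhoLin C := by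
  obtain ⟨Ω, hΩ, h0⟩ := Submodule.exists_mem_ne_zero_of_ne_bot hC
  exact le_csInf ⟨_, Ω, hΩ, h0, rfl⟩ fun _ ⟨Ω, hΩ, h0, hr⟩ => hr ▸ h Ω hΩ h0

theorem exists_ne_zero_rhoMat_add_finrank_le (D : Submodule F (Matrix (Fin n) (Fin s) F))
    (hD : 1 ≤ finrank F D) : ∃ Ω ∈ D, Ω ≠ 0 ∧ rhoMat Ω + finrank F D ≤ n * s + 1 := by
  have hDle : finrank F D ≤ n * s := D.finrank_le.trans_eq finrank_matrix_fin
  obtain ⟨u, hu, hsum⟩ := exists_le_sum_eq (fun _ : Fin n => s) (K := n * s + 1 - finrank F D)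
    (by rw [Fin.sum_const, smul_eq_mul]; omega)
  have hnotdisj : ¬Disjoint D (shapeSubmodule F u) := fun hdisj => by
    have := Submodule.finrank_add_finrank_le_of_disjoint hdisj
    rw [finrank_shapeSubmodule hu, hsum, finrank_matrix_fin] at this
    omega
  obtain ⟨Ω, hΩD, hΩu, h0⟩ := by simpa [Submodule.disjoint_def] using hnotdisj
  exact ⟨Ω, hΩD, h0, by have := rhoMat_le_of_mem_shapeSubmodule hΩu; omega⟩

theorem finrank_lt_rhoMat_of_mem_dualCode {C : Submodule F (Matrix (Fin n) (Fin s) F)}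
    (hC : ∀ Ω ∈ C, Ω ≠ 0 → n * s < rhoMat Ω + finrank F C)
    {Ω' : Matrix (Fin n) (Fin s) F} (hΩ' : Ω' ∈ dualCode C) (h0 : Ω' ≠ 0) :
    finrank F C < rhoMat Ω' := by
  by_contra! hle
  have hCle : finrank F C ≤ n * s := C.finrank_le.trans_eq finrank_matrix_fin
  have hcosum : ∑ j, (s - rhoRow (Ω' j)) = n * s - rhoMat Ω' := by
    rw [Finset.sum_tsub_distrib (f := fun _ => s) (g := fun j => rhoRow (Ω' j)) _
      fun j _ => rhoRow_le _]
    simp [rhoMat]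
  obtain ⟨r, hr, hsum⟩ := exists_le_sum_eq (fun j => s - rhoRow (Ω' j))
    (K := n * s - finrank F C) (by omega)
  have hdisj : Disjoint C (shapeSubmodule F r) := Submodule.disjoint_def.2 fun x hxC hxr => by
    by_contra hx0
    have := hC x hxC hx0
    have := rhoMat_le_of_mem_shapeSubmodule hxr
    omega
  have htop := Submodule.eq_top_of_disjoint C _ (by
    rw [finrank_matrix_fin, finrank_shapeSubmodule fun j => (hr j).trans (Nat.sub_le _ _), hsum]
    omega) hdisj
  refine h0 (eq_zero_of_mem_dualCode_of_sup_eq_top hΩ' (fun v hv => ?_) htop)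
  have hcompl : ∀ j, r j + rhoRow (Ω' j) ≤ s := fun j => by
    have := hr j
    have := rhoRow_le (Ω' j)
    omega
  exact rtInner_eq_zero_of_mem_shapeSubmodule hcompl hv (mem_shapeSubmodule_rhoRow Ω')

end Weights

theorem dual_of_MDS_is_MDS_general {n s k : ℕ} (F : Type*) [Field F] [DecidableEq F]
    (hkn : k < n * s)
    (C : Submodule F (Matrix (Fin n) (Fin s) F))
    (hdim : Module.finrank F C = k) (hMDS : rhoLin C = n * s - k + 1) :
    Module.finrank F (dualCode C) = n * s - k ∧ rhoLin (dualCode C) = k + 1 := by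
  have hdim' : finrank F (dualCode C) = n * s - k := by rw [finrank_dualCode, hdim]
  obtain ⟨Ω₀, hΩ₀, hΩ₀0, hΩ₀le⟩ := exists_ne_zero_rhoMat_add_finrank_le (dualCode C) (by omega)
  have hC : ∀ Ω ∈ C, Ω ≠ 0 → n * s < rhoMat Ω + finrank F C := fun Ω hΩ h0 => by
    have := rhoLin_le_rhoMat hΩ h0
    omega
  refine ⟨hdim', le_antisymm ?_ ?_⟩
  · have := rhoLin_le_rhoMat hΩ₀ hΩ₀0
    omega
  · refine le_rhoLin (Submodule.ne_bot_iff _ |>.2 ⟨Ω₀, hΩ₀, hΩ₀0⟩) fun Ω hΩ h0 => ?_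
    exact hdim ▸ finrank_lt_rhoMat_of_mem_dualCode hC hΩ h0

theorem dual_of_MDS_is_MDS {q n s k : ℕ} (F : Type*) [Field F] [Fintype F] [DecidableEq F]
    (hq : Fintype.card F = q) (hk : 1 ≤ k) (hkn : k < n * s)
    (C : Submodule F (Matrix (Fin n) (Fin s) F))
    (hdim : Module.finrank F C = k) (hMDS : rhoLin C = n * s - k + 1) :
    Module.finrank F (dualCode C) = n * s - k ∧ rhoLin (dualCode C) = k + 1 :=
  dual_of_MDS_is_MDS_general F hkn C hdim hMDS
end

section
/- Let q ≥ n-1 be a prime power, let β_1,...,β_n be distinct elements of F_q ∪ {∞}, and let Γ_{n,s}: F_q[z] → Mat_{n,s}(F_q) send f to the matrix whose i-th row is (∂^{s-1}f(β_i), ..., ∂f(β_i), f(β_i)) (hyperderivatives; at ∞, ∂^j f(∞) is the coefficient f_{deg f - j}). Then for 1 ≤ k ≤ ns, the image Γ_{n,s}(M^k) of the space M^k of polynomials of degree < k is a k-dimensional linear code with minimum nonzero ρ-weight exactly ns - k + 1, i.e., a linear MDS [ns,k]_s-code in the metric ρ. -/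
/-- The interpolation matrix `Γ_{n,s} f` of a polynomial `f` (of degree `< k`) at the
nodes `β_i ∈ F ∪ {∞}` (`none` denotes `∞`): the `i`-th row is
`(∂^{s-1} f(β_i), ..., ∂ f(β_i), f(β_i))`, where `∂^j` is the Hasse hyperderivative and,
at `∞`, `∂^j f(∞)` is the coefficient `f_{k-1-j}` (and `0` for `j ≥ k`). -/
noncomputable def GammaMat {F : Type*} [Field F] (n s k : ℕ) (β : Fin n → Option F)
    (f : Polynomial F) : Matrix (Fin n) (Fin s) F :=
  fun i col =>
    match β i with
    | some b => (Polynomial.hasseDeriv (s - 1 - col.1) f).eval b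
    | none => if s - 1 - col.1 < k then f.coeff (k - 1 - (s - 1 - col.1)) else 0

/-!
Write `E i = s - ρ(row i)` for the number of trailing zeros of the `i`-th row of `Γ f`. The
hyperderivatives `∂^j f(b)` are the Taylor coefficients of `f` at `b`, so at a finite node
`(X - b)^(E i)` divides `f`, while at `∞` the vanishing of the top coefficients forces
`deg f + E i ≤ k - 1`. The nodes are distinct, so the factors are coprime and `∑ E i ≤ k - 1`,
i.e. `ρ(Γ f) ≥ ns - k + 1` for every nonzero `f` of degree `< k`; in particular `Γ` is injective
on `M^k`. The bound is attained by `f = ∏ (X - β_i)^(e_i)` over the finite nodes, for any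
`e_i ≤ s` with `∑ e_i = k - 1`, the node at `∞` absorbing the gap `k - 1 - deg f`.
-/

open Polynomial

section RosenbloomTsfasman

variable {F : Type*} [Zero F] [DecidableEq F]

lemma rhoRow_le_iff {s r : ℕ} {ω : Fin s → F} : rhoRow ω ≤ r ↔ ∀ c : Fin s, r ≤ c → ω c = 0 := by
  simp only [rhoRow, Finset.sup_le_iff, Finset.mem_filter, Finset.mem_univ, true_and]
  exact forall_congr' fun c => by rw [not_imp_comm, Nat.add_one_le_iff, not_lt]

lemma rhoRow_le_length {s : ℕ} (ω : Fin s → F) : rhoRow ω ≤ s :=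
  Finset.sup_le fun j _ => j.2

lemma rhoMat_zero {n s : ℕ} : rhoMat (0 : Matrix (Fin n) (Fin s) F) = 0 :=
  Finset.sum_eq_zero fun _ _ => Nat.le_zero.1 <| rhoRow_le_iff.2 fun _ _ => rfl

lemma rhoMat_add_sum_sub_rhoRow {n s : ℕ} (Ω : Matrix (Fin n) (Fin s) F) :
    rhoMat Ω + ∑ i, (s - rhoRow (Ω i)) = n * s := by
  rw [rhoMat, ← Finset.sum_add_distrib,
    Finset.sum_congr rfl fun i _ => Nat.add_sub_cancel' (rhoRow_le_length (Ω i))]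
  simp

end RosenbloomTsfasman

lemma X_sub_C_pow_dvd_iff_hasseDeriv_eval {R : Type*} [CommRing R] {f : R[X]} {b : R} {m : ℕ} :
    (X - C b) ^ m ∣ f ↔ ∀ j < m, (hasseDeriv j f).eval b = 0 := by
  rw [← map_dvd_iff (taylorEquiv b), map_pow]
  change taylor b (X - C b) ^ m ∣ taylor b f ↔ _
  rw [map_sub, taylor_X, taylor_C, add_sub_cancel_right, X_pow_dvd_iff]
  simp only [taylor_coeff]

lemma exists_fin_sum_eq_of_le_mul {n m s : ℕ} (h : m ≤ n * s) :
    ∃ e : Fin n → ℕ, (∀ i, e i ≤ s) ∧ ∑ i, e i = m := by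
  induction n generalizing m with
  | zero => exact ⟨Fin.elim0, fun i => i.elim0, by simp_all⟩
  | succ n ih =>
    obtain ⟨e, hes, hsum⟩ := ih (m := m - min s m) (by rw [Nat.succ_mul] at h; omega)
    refine ⟨Fin.cons (min s m) e, Fin.cases (min_le_left _ _) hes, ?_⟩
    simp only [Fin.sum_univ_succ, Fin.cons_zero, Fin.cons_succ, hsum]
    omega

section Nodes

variable {ι F : Type*} [Fintype ι]

lemma sum_eq_sum_elim_add_of_eq_none {β : ι → Option F} (hβ : Function.Injective β) {i₀ : ι}
    (h : β i₀ = none) (e : ι → ℕ) :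
    ∑ i, e i = (∑ i, (β i).elim 0 fun _ => e i) + e i₀ := by
  classical
  calc ∑ i, e i = ∑ i, (((β i).elim 0 fun _ => e i) + if i = i₀ then e i else 0) :=
        Finset.sum_congr rfl fun i _ => by
          by_cases hi : i = i₀
          · subst hi; simp [h]
          · obtain ⟨b, hb⟩ := Option.ne_none_iff_exists'.1 fun h' => hi (hβ (h'.trans h.symm))
            simp [hb, hi]
    _ = _ := by rw [Finset.sum_add_distrib, Finset.sum_ite_eq']; simp

variable [Field F]

noncomputable def nodePoly (β : ι → Option F) (e : ι → ℕ) : F[X] :=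
  ∏ i, (β i).elim 1 fun b => (X - C b) ^ e i

lemma monic_elim_X_sub_C_pow (b : Option F) (m : ℕ) :
    (b.elim 1 fun b => (X - C b) ^ m : F[X]).Monic := by
  cases b
  · exact monic_one
  · exact (monic_X_sub_C _).pow _

variable {β : ι → Option F} {e : ι → ℕ}

lemma monic_nodePoly : (nodePoly β e).Monic :=
  monic_prod_of_monic _ _ fun _ _ => monic_elim_X_sub_C_pow _ _

lemma natDegree_nodePoly : (nodePoly β e).natDegree = ∑ i, (β i).elim 0 fun _ => e i := by
  rw [nodePoly, natDegree_prod_of_monic _ _ fun _ _ => monic_elim_X_sub_C_pow _ _]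
  exact Finset.sum_congr rfl fun i _ => by cases β i <;> simp

lemma X_sub_C_pow_dvd_nodePoly {i : ι} {b : F} (h : β i = some b) :
    (X - C b) ^ e i ∣ nodePoly β e := by
  simpa [nodePoly, h] using Finset.dvd_prod_of_mem (fun i => (β i).elim 1 fun b => (X - C b) ^ e i)
    (Finset.mem_univ i)

lemma nodePoly_dvd (hβ : Function.Injective β) {f : F[X]}
    (h : ∀ i b, β i = some b → (X - C b) ^ e i ∣ f) : nodePoly β e ∣ f := by
  refine Finset.prod_dvd_of_coprime (fun i _ j _ hij => ?_) fun i _ => ?_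
  · rcases hi : β i with _ | a <;> rcases hj : β j with _ | c <;>
      simp only [Function.onFun, hi, hj, Option.elim_none, Option.elim_some, isCoprime_one_left,
        isCoprime_one_right]
    have hac : a ≠ c := by rintro rfl; exact hij (hβ (hi.trans hj.symm))
    exact (isCoprime_X_sub_C_of_isUnit_sub (sub_ne_zero_of_ne hac).isUnit).pow
  · rcases hi : β i with _ | b
    · exact one_dvd f
    · exact h i b hi

-- A nonzero form of degree `d` on `ℙ¹` has at most `d` zeros, counted with multiplicity;
-- its order at `∞` is `d - natDegree f`.
theorem sum_le_of_pow_dvd (hβ : Function.Injective β) {f : F[X]} (hf : f ≠ 0) {d : ℕ}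
    (hd : f.natDegree ≤ d) (hfin : ∀ i b, β i = some b → (X - C b) ^ e i ∣ f)
    (hinf : ∀ i, β i = none → f.natDegree + e i ≤ d) : ∑ i, e i ≤ d := by
  have hfin_sum : (∑ i, (β i).elim 0 fun _ => e i) ≤ f.natDegree :=
    natDegree_nodePoly (β := β) ▸ natDegree_le_of_dvd (nodePoly_dvd hβ hfin) hf
  by_cases hnone : ∃ i₀, β i₀ = none
  · obtain ⟨i₀, h₀⟩ := hnone
    have := hinf i₀ h₀
    rw [sum_eq_sum_elim_add_of_eq_none hβ h₀]
    omega
  · push Not at hnone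
    calc ∑ i, e i = ∑ i, (β i).elim 0 fun _ => e i :=
          Finset.sum_congr rfl fun i _ => by
            obtain ⟨b, hb⟩ := Option.ne_none_iff_exists'.1 (hnone i); simp [hb]
      _ ≤ d := hfin_sum.trans hd

end Nodes

section Interpolation

variable {F : Type*} [Field F] {n s k : ℕ} {β : Fin n → Option F} {f : F[X]} {i : Fin n}

lemma GammaMat_apply_of_eq_some {b : F} (h : β i = some b) (c : Fin s) :
    GammaMat n s k β f i c = (hasseDeriv (s - 1 - c) f).eval b := by
  simp only [GammaMat, h]

lemma GammaMat_apply_of_eq_none (h : β i = none) (c : Fin s) :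
    GammaMat n s k β f i c = if s - 1 - c < k then f.coeff (k - 1 - (s - 1 - c)) else 0 := by
  simp only [GammaMat, h]

variable (n s k β) in
noncomputable def gammaLinearMap : F[X] →ₗ[F] Matrix (Fin n) (Fin s) F where
  toFun := GammaMat n s k β
  map_add' f g := by
    ext i c
    rcases h : β i with _ | b
    · simp only [GammaMat_apply_of_eq_none h, Matrix.add_apply, coeff_add]
      split_ifs <;> simp
    · simp only [GammaMat_apply_of_eq_some h, Matrix.add_apply, map_add, eval_add]
  map_smul' a f := by
    ext i c
    rcases h : β i with _ | b
    · simp only [GammaMat_apply_of_eq_none h, Matrix.smul_apply, coeff_smul, RingHom.id_apply]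
      split_ifs <;> simp
    · simp only [GammaMat_apply_of_eq_some h, Matrix.smul_apply, map_smul, eval_smul,
        RingHom.id_apply]

variable [DecidableEq F]

lemma rhoRow_GammaMat_le_iff_of_eq_some {b : F} (h : β i = some b) {m : ℕ} (hm : m ≤ s) :
    rhoRow (GammaMat n s k β f i) ≤ s - m ↔ (X - C b) ^ m ∣ f := by
  simp only [rhoRow_le_iff, X_sub_C_pow_dvd_iff_hasseDeriv_eval, GammaMat_apply_of_eq_some h]
  refine ⟨fun hrow j hj => ?_, fun hf c hc => hf _ (by omega)⟩
  simpa [show s - 1 - (s - 1 - j) = j by omega] using hrow ⟨s - 1 - j, by omega⟩ (by simp; omega)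

lemma rhoRow_GammaMat_le_iff_of_eq_none (h : β i = none) {m : ℕ} (hm : m ≤ s)
    (hf : f.degree < k) :
    rhoRow (GammaMat n s k β f i) ≤ s - m ↔ f.degree < (k - m : ℕ) := by
  simp only [rhoRow_le_iff, GammaMat_apply_of_eq_none h, degree_lt_iff_coeff_zero]
  refine ⟨fun hrow t ht => ?_, fun hf' c hc => ?_⟩
  · rcases lt_or_ge t k with htk | htk
    · simpa [show s - 1 - (s - 1 - (k - 1 - t)) = k - 1 - t by omega,
        show k - 1 - (k - 1 - t) = t by omega, show k - 1 - t < k by omega]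
        using hrow ⟨s - 1 - (k - 1 - t), by omega⟩ (by simp; omega)
    · exact coeff_eq_zero_of_degree_lt (hf.trans_le (by exact_mod_cast htk))
  · split_ifs
    · exact hf' _ (by omega)
    · rfl

theorem mul_lt_rhoMat_GammaMat_add (hβ : Function.Injective β) (hf : f ≠ 0)
    (hdeg : f.degree < k) : n * s < rhoMat (GammaMat n s k β f) + k := by
  have hnat : f.natDegree < k := (natDegree_lt_iff_degree_lt hf).2 hdeg
  have hrow : ∀ i, rhoRow (GammaMat n s k β f i) ≤ s - (s - rhoRow (GammaMat n s k β f i)) :=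
    fun i => by have := rhoRow_le_length (GammaMat n s k β f i); omega
  have hsum : ∑ i, (s - rhoRow (GammaMat n s k β f i)) ≤ k - 1 := by
    refine sum_le_of_pow_dvd hβ hf (by omega) (fun i b hb => ?_) fun i hb => ?_
    · exact (rhoRow_GammaMat_le_iff_of_eq_some hb (Nat.sub_le _ _)).1 (hrow i)
    · have := (natDegree_lt_iff_degree_lt hf).2 <|
        (rhoRow_GammaMat_le_iff_of_eq_none hb (Nat.sub_le _ _) hdeg).1 (hrow i)
      omega
  have := rhoMat_add_sum_sub_rhoRow (GammaMat n s k β f)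
  omega

lemma GammaMat_ne_zero (hβ : Function.Injective β) (hkn : k ≤ n * s) (hf : f ≠ 0)
    (hdeg : f.degree < k) : GammaMat n s k β f ≠ 0 := by
  intro h
  have := mul_lt_rhoMat_GammaMat_add (s := s) hβ hf hdeg
  rw [h, rhoMat_zero] at this
  omega

theorem exists_rhoMat_GammaMat_add_le (hβ : Function.Injective β) (hk : 1 ≤ k)
    (hkn : k ≤ n * s) :
    ∃ f : F[X], f ≠ 0 ∧ f.degree < k ∧ rhoMat (GammaMat n s k β f) + (k - 1) ≤ n * s := by
  obtain ⟨e, hes, hsum⟩ := exists_fin_sum_eq_of_le_mul (n := n) (s := s) (m := k - 1) (by omega)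
  have hf : nodePoly β e ≠ 0 := monic_nodePoly.ne_zero
  have hnat : (nodePoly β e).natDegree ≤ k - 1 := by
    rw [natDegree_nodePoly, ← hsum]
    exact Finset.sum_le_sum fun i _ => by cases β i <;> simp
  have hdeg : (nodePoly β e).degree < k := (natDegree_lt_iff_degree_lt hf).1 (by omega)
  have hrow : ∀ i, rhoRow (GammaMat n s k β (nodePoly β e) i) ≤ s - e i := by
    intro i
    rcases hb : β i with _ | b
    · have := sum_eq_sum_elim_add_of_eq_none hβ hb e
      rw [← natDegree_nodePoly, hsum] at this
      rw [rhoRow_GammaMat_le_iff_of_eq_none hb (hes i) hdeg,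
        ← natDegree_lt_iff_degree_lt hf]
      omega
    · exact (rhoRow_GammaMat_le_iff_of_eq_some hb (hes i)).2 (X_sub_C_pow_dvd_nodePoly hb)
  refine ⟨nodePoly β e, hf, hdeg, ?_⟩
  calc rhoMat (GammaMat n s k β (nodePoly β e)) + (k - 1) ≤ ∑ i, (s - e i) + ∑ i, e i := by
        rw [hsum]; exact Nat.add_le_add_right (Finset.sum_le_sum fun i _ => hrow i) _
    _ = n * s := by
        rw [← Finset.sum_add_distrib, Finset.sum_congr rfl fun i _ => Nat.sub_add_cancel (hes i)]
        simp

end Interpolation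

theorem interpolation_code_is_MDS_general {n s k : ℕ} (F : Type*) [Field F]
    [DecidableEq F]
    (hk : 1 ≤ k) (hkn : k ≤ n * s)
    (β : Fin n → Option F) (hβ : Function.Injective β) :
    ∃ C : Submodule F (Matrix (Fin n) (Fin s) F),
      (C : Set (Matrix (Fin n) (Fin s) F))
          = (GammaMat n s k β) '' {f : Polynomial F | f.degree < (k : ℕ)} ∧
      Module.finrank F C = k ∧
      sInf {r | ∃ Ω ∈ C, Ω ≠ 0 ∧ rhoMat Ω = r} = n * s - k + 1 := by
  let Γ := gammaLinearMap n s k β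
  have hinj : Set.InjOn Γ (degreeLT F k) := LinearMap.disjoint_ker_iff_injOn.1 <|
    LinearMap.disjoint_ker.2 fun f hf hΓ => by
      by_contra h
      exact GammaMat_ne_zero hβ hkn h (mem_degreeLT.1 hf) hΓ
  refine ⟨(degreeLT F k).map Γ, ?_, ?_, ?_⟩
  · ext Ω
    simp [Γ, gammaLinearMap, mem_degreeLT]
  · rw [← (LinearEquiv.ofBijective (Γ.submoduleMap _)
      ⟨LinearMap.submoduleMap_injective_of_injOn hinj, Γ.submoduleMap_surjective _⟩).finrank_eq,
      (degreeLTEquiv F k).finrank_eq, Module.finrank_fin_fun]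
  · obtain ⟨f, hf, hdeg, hrho⟩ := exists_rhoMat_GammaMat_add_le hβ hk hkn
    refine IsLeast.csInf_eq ⟨⟨GammaMat n s k β f, ⟨f, mem_degreeLT.2 hdeg, rfl⟩,
      GammaMat_ne_zero hβ hkn hf hdeg, ?_⟩, ?_⟩
    · have := mul_lt_rhoMat_GammaMat_add (s := s) hβ hf hdeg
      omega
    · rintro _ ⟨_, ⟨g, hg, rfl⟩, hne, rfl⟩
      have hg0 : g ≠ 0 := by rintro rfl; exact hne (map_zero Γ)
      have : n * s < rhoMat (Γ g) + k := mul_lt_rhoMat_GammaMat_add hβ hg0 (mem_degreeLT.1 hg)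
      omega

theorem interpolation_code_is_MDS {q n s k : ℕ} (F : Type*) [Field F] [Fintype F]
    [DecidableEq F] (hq : Fintype.card F = q) (hqn : n - 1 ≤ q)
    (hk : 1 ≤ k) (hkn : k ≤ n * s)
    (β : Fin n → Option F) (hβ : Function.Injective β) :
    ∃ C : Submodule F (Matrix (Fin n) (Fin s) F),
      (C : Set (Matrix (Fin n) (Fin s) F))
          = (GammaMat n s k β) '' {f : Polynomial F | f.degree < (k : ℕ)} ∧
      Module.finrank F C = k ∧
      sInf {r | ∃ Ω ∈ C, Ω ≠ 0 ∧ rhoMat Ω = r} = n * s - k + 1 :=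
  interpolation_code_is_MDS_general F hk hkn β hβ
end
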